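/- arXiv:2001.07502 — 5 statements merged into one kernel-verified Lean document; each statement's English description precedes it below -/
import Mathlib

section
/- Let E be a metric space and x : ℝ → E a continuous function. If x is Bohr almost periodic, then the set {x(t) : t ∈ ℝ} is totally bounded (relatively compact when E is complete). -/
def RelativelyDense (A : Set ℝ) : Prop :=
  ∃ l > 0, ∀ t : ℝ, ∃ a ∈ A, a ∈ Set.Icc t (t + l)

/-- Bohr almost periodicity of a continuous function into a metric space. -/
def IsBohrAlmostPeriodic {E : Type*} [MetricSpace E] (x : ℝ → E) : Prop :=
  Continuous x ∧
    ∀ ε > 0, RelativelyDense {τ : ℝ | ∀ t : ℝ, dist (x t) (x (t + τ)) ≤ ε}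

/-!
Given `ε > 0`, every `t` has an `ε`-almost period `τ` with `t + τ ∈ [0, l]`, so the range of `x`
lies in the closed `ε`-thickening of the compact set `x '' [0, l]`. A set that lies within every
positive distance of some totally bounded set is itself totally bounded.
-/

open Metric Set

theorem totallyBounded_of_forall_subset_cthickening {α : Type*} [PseudoMetricSpace α]
    {s : Set α} (h : ∀ ε > 0, ∃ t, TotallyBounded t ∧ s ⊆ cthickening ε t) :
    TotallyBounded s := by
  refine Metric.totallyBounded_iff.mpr fun ε hε => ?_
  obtain ⟨t, ht, hst⟩ := h (ε / 3) (by positivity)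
  obtain ⟨u, hu, htu⟩ := Metric.totallyBounded_iff.mp ht (ε / 3) (by positivity)
  refine ⟨u, hu, ?_⟩
  rw [← thickening_eq_biUnion_ball] at htu ⊢
  calc s ⊆ cthickening (ε / 3) (thickening (ε / 3) u) :=
        hst.trans (cthickening_subset_of_subset _ htu)
    _ ⊆ cthickening (ε / 3 + ε / 3) u := cthickening_thickening_subset (by positivity) _ _
    _ ⊆ thickening ε u := cthickening_subset_thickening' hε (by linarith) _

theorem range_subset_cthickening_image_Icc {E : Type*} [PseudoMetricSpace E] {x : ℝ → E}
    {ε : ℝ} (h : RelativelyDense {τ : ℝ | ∀ t : ℝ, dist (x t) (x (t + τ)) ≤ ε}) :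
    ∃ l, range x ⊆ cthickening ε (x '' Icc 0 l) := by
  obtain ⟨l, -, hdense⟩ := h
  refine ⟨l, ?_⟩
  rintro _ ⟨t, rfl⟩
  obtain ⟨τ, hτ, hτ_mem⟩ := hdense (-t)
  have hshift : t + τ ∈ Icc 0 l := ⟨by linarith [hτ_mem.1], by linarith [hτ_mem.2]⟩
  exact mem_cthickening_of_dist_le _ _ _ _ (mem_image_of_mem x hshift) (hτ t)

theorem totallyBounded_range_of_bohrAlmostPeriodic {E : Type*} [MetricSpace E]
    (x : ℝ → E) (hx : IsBohrAlmostPeriodic x) :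
    TotallyBounded (Set.range x) := by
  obtain ⟨hcont, hperiods⟩ := hx
  refine totallyBounded_of_forall_subset_cthickening fun ε hε => ?_
  obtain ⟨l, hl⟩ := range_subset_cthickening_image_Icc (hperiods ε hε)
  exact ⟨_, (isCompact_Icc.image hcont).totallyBounded, hl⟩
end

section
/- Let E be a metric space and x : ℝ → E Bohr almost periodic. Then x is uniformly continuous on ℝ. -/
/-!
Let `l` be an inclusion length for the `ε/3`-almost periods. Continuity on the compact
interval `[-1, l + 1]` is uniform. An `ε/3`-almost period `τ` with `a + τ ∈ [0, l]` moves
any nearby pair `a, b` into that interval, and the triangle inequality transfers the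
estimate there back to `a, b`.
-/

theorem RelativelyDense.exists_add_mem_Icc {A : Set ℝ} (hA : RelativelyDense A) :
    ∃ l > 0, ∀ a : ℝ, ∃ τ ∈ A, a + τ ∈ Set.Icc 0 l := by
  obtain ⟨l, hl, hdense⟩ := hA
  refine ⟨l, hl, fun a => ?_⟩
  obtain ⟨τ, hτA, hτ₀, hτl⟩ := hdense (-a)
  exact ⟨τ, hτA, by linarith, by linarith⟩

theorem dist_le_dist_add_add_two_mul_of_almostPeriod {E : Type*} [PseudoMetricSpace E]
    {x : ℝ → E} {ε τ : ℝ} (hτ : ∀ t, dist (x t) (x (t + τ)) ≤ ε) (a b : ℝ) :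
    dist (x a) (x b) ≤ dist (x (a + τ)) (x (b + τ)) + 2 * ε :=
  calc dist (x a) (x b)
      ≤ dist (x a) (x (a + τ)) + dist (x (a + τ)) (x (b + τ)) + dist (x (b + τ)) (x b) :=
        dist_triangle4 _ _ _ _
    _ ≤ ε + dist (x (a + τ)) (x (b + τ)) + ε := by
        gcongr
        · exact hτ a
        · rw [dist_comm]; exact hτ b
    _ = dist (x (a + τ)) (x (b + τ)) + 2 * ε := by ring

theorem add_mem_Icc_of_dist_lt_one {a b τ l : ℝ} (ha : a + τ ∈ Set.Icc 0 l) (hab : dist a b < 1) :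
    b + τ ∈ Set.Icc (-1) (l + 1) := by
  rw [Real.dist_eq, abs_sub_lt_iff] at hab
  exact ⟨by linarith [ha.1], by linarith [ha.2]⟩

theorem uniformContinuous_of_bohrAlmostPeriodic {E : Type*} [MetricSpace E]
    (x : ℝ → E) (hx : IsBohrAlmostPeriodic x) :
    UniformContinuous x := by
  rw [Metric.uniformContinuous_iff]
  intro ε hε
  obtain ⟨l, -, hperiod⟩ := (hx.2 (ε / 3) (by positivity)).exists_add_mem_Icc
  have hUC := isCompact_Icc.uniformContinuousOn_of_continuous
    (s := Set.Icc (-1 : ℝ) (l + 1)) hx.1.continuousOn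
  obtain ⟨δ, hδ, hclose⟩ := Metric.uniformContinuousOn_iff.1 hUC (ε / 3) (by positivity)
  refine ⟨min δ 1, lt_min hδ one_pos, fun {a b} hab => ?_⟩
  obtain ⟨τ, hτ, haτ⟩ := hperiod a
  have hbτ := add_mem_Icc_of_dist_lt_one haτ (hab.trans_le (min_le_right _ _))
  have haτ' : a + τ ∈ Set.Icc (-1 : ℝ) (l + 1) :=
    Set.Icc_subset_Icc (by norm_num) (by linarith) haτ
  have hshift : dist (x (a + τ)) (x (b + τ)) < ε / 3 :=
    hclose _ haτ' _ hbτ (by rw [dist_add_right]; exact hab.trans_le (min_le_left _ _))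
  linarith [dist_le_dist_add_add_two_mul_of_almostPeriod hτ a b]
end

section
/- Let E, F, G be metric spaces and x : ℝ → E, y : ℝ → F, z : ℝ → G continuous functions. Then x, y and z are each Bohr almost periodic if and only if the function t ↦ (x(t), y(t), z(t)) with values in E × F × G is Bohr almost periodic. -/
/-!
Since `E × F × G = E × (F × G)` carries the sup metric, the `ε`-almost periods of a pair are the
common `ε`-almost periods of its components, and only the existence of relatively dense common
almost periods needs an argument (Bochner's). Almost periodic functions are uniformly continuous:
an almost period moves any two nearby points into one fixed compact interval. Now pick
`ε/4`-almost periods `τ₁ a` of `f` and `τ₂ a` of `g` in `[a, a + l]` for every `a`. The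
differences `τ₁ a - τ₂ a` stay in a bounded interval, so a bounded set of parameters `b`
approximates all of them within the modulus of uniform continuity of `g`. Then `τ₁ a - τ₁ b` is
an `ε/2`-almost period of `f`, and it is close enough to the `ε/2`-almost period `τ₂ a - τ₂ b`
of `g` to be an `ε`-almost period of `g` too; letting `a` run to the right of `t` places it in an
interval `[t, t + L]` with `L` independent of `t`.
-/

open Set Metric

def almostPeriods {E : Type*} [PseudoMetricSpace E] (f : ℝ → E) (ε : ℝ) : Set ℝ :=
  {τ | ∀ t, dist (f t) (f (t + τ)) ≤ ε}

lemma RelativelyDense.mono {A B : Set ℝ} (h : RelativelyDense A) (hAB : A ⊆ B) :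
    RelativelyDense B := by
  obtain ⟨l, hl, h⟩ := h
  exact ⟨l, hl, fun t => (h t).imp fun _ ha => ⟨hAB ha.1, ha.2⟩⟩

lemma isBohrAlmostPeriodic_iff {E : Type*} [MetricSpace E] {f : ℝ → E} :
    IsBohrAlmostPeriodic f ↔ Continuous f ∧ ∀ ε > 0, RelativelyDense (almostPeriods f ε) :=
  Iff.rfl

section AlmostPeriods

variable {E F : Type*} [PseudoMetricSpace E] [PseudoMetricSpace F] {f : ℝ → E} {g : ℝ → F}

lemma almostPeriods_mono {ε η : ℝ} (h : ε ≤ η) : almostPeriods f ε ⊆ almostPeriods f η :=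
  fun _ hτ t => (hτ t).trans h

lemma sub_mem_almostPeriods {ε η a b : ℝ} (ha : a ∈ almostPeriods f ε)
    (hb : b ∈ almostPeriods f η) : a - b ∈ almostPeriods f (η + ε) := fun t =>
  calc dist (f t) (f (t + (a - b)))
      ≤ dist (f t) (f (t - b)) + dist (f (t - b)) (f (t - b + a)) := by
        rw [show t + (a - b) = t - b + a by ring]
        exact dist_triangle _ _ _
    _ ≤ η + ε := by
        gcongr
        · simpa [dist_comm] using hb (t - b)
        · exact ha (t - b)

lemma almostPeriods_prodMk (ε : ℝ) :
    almostPeriods (fun t => (f t, g t)) ε = almostPeriods f ε ∩ almostPeriods g ε := by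
  ext τ
  simp only [almostPeriods, mem_ofPred_eq, mem_inter_iff, Prod.dist_eq, max_le_iff, forall_and]

end AlmostPeriods

lemma exists_isBounded_forall_exists_dist_lt {ι α : Type*} [PseudoMetricSpace ι]
    [PseudoMetricSpace α] {d : ι → α} (hd : TotallyBounded (range d)) {δ : ℝ} (hδ : 0 < δ) :
    ∃ S : Set ι, Bornology.IsBounded S ∧ ∀ a, ∃ b ∈ S, dist (d a) (d b) < δ := by
  obtain ⟨T, hT, hTfin, hcover⟩ := finite_approx_of_totallyBounded hd δ hδ
  rw [← image_univ] at hT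
  obtain ⟨S, -, hSfin, rfl⟩ := exists_subset_image_finite_and.1 ⟨T, hT, hTfin, rfl⟩
  refine ⟨S, hSfin.isBounded, fun a => ?_⟩
  obtain ⟨_, ⟨b, hb, rfl⟩, hab⟩ := mem_iUnion₂.1 (hcover (mem_range_self a))
  exact ⟨b, hb, hab⟩

lemma IsBohrAlmostPeriodic.uniformContinuous {E : Type*} [MetricSpace E] {f : ℝ → E}
    (hf : IsBohrAlmostPeriodic f) : UniformContinuous f := by
  rw [Metric.uniformContinuous_iff]
  intro ε hε
  obtain ⟨l, -, hdense⟩ := hf.2 (ε / 3) (by positivity)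
  obtain ⟨δ, hδ, hK⟩ := Metric.uniformContinuousOn_iff.1
    ((isCompact_Icc (a := -1) (b := l + 1)).uniformContinuousOn_of_continuous hf.1.continuousOn)
    (ε / 3) (by positivity)
  refine ⟨min δ 1, by positivity, fun u v huv => ?_⟩
  obtain ⟨τ, hτ, hτI⟩ := hdense (-u)
  have huv' := abs_lt.1 (Real.dist_eq u v ▸ huv.trans_le (min_le_right δ 1))
  have hu : u + τ ∈ Icc (-1) (l + 1) := ⟨by linarith [hτI.1], by linarith [hτI.2]⟩
  have hv : v + τ ∈ Icc (-1) (l + 1) := ⟨by linarith [hτI.1], by linarith [hτI.2]⟩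
  have hmid : dist (f (u + τ)) (f (v + τ)) < ε / 3 :=
    hK _ hu _ hv (by simpa using huv.trans_le (min_le_left δ 1))
  have hv' : dist (f (v + τ)) (f v) ≤ ε / 3 := by rw [dist_comm]; exact hτ v
  linarith [dist_triangle4 (f u) (f (u + τ)) (f (v + τ)) (f v), hτ u]

lemma relativelyDense_almostPeriods_inter {E F : Type*} [MetricSpace E] [MetricSpace F]
    {f : ℝ → E} {g : ℝ → F} (hf : IsBohrAlmostPeriodic f) (hg : IsBohrAlmostPeriodic g)
    {ε : ℝ} (hε : 0 < ε) : RelativelyDense (almostPeriods f ε ∩ almostPeriods g ε) := by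
  obtain ⟨δ, hδ, hgδ⟩ := Metric.uniformContinuous_iff.1 hg.uniformContinuous (ε / 2) (by positivity)
  obtain ⟨l₁, hl₁, hf'⟩ := hf.2 (ε / 4) (by positivity)
  obtain ⟨l₂, -, hg'⟩ := hg.2 (ε / 4) (by positivity)
  choose τ₁ hτ₁ hτ₁I using hf'
  choose τ₂ hτ₂ hτ₂I using hg'
  have hdiff : range (fun a => τ₁ a - τ₂ a) ⊆ Icc (-l₂) l₁ := range_subset_iff.2 fun a =>
    ⟨by linarith [(hτ₁I a).1, (hτ₂I a).2], by linarith [(hτ₁I a).2, (hτ₂I a).1]⟩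
  obtain ⟨S, hSbdd, hS⟩ :=
    exists_isBounded_forall_exists_dist_lt ((totallyBounded_Icc _ _).subset hdiff) hδ
  obtain ⟨M, hM⟩ := (isBounded_iff_subset_closedBall (0 : ℝ)).1 hSbdd
  have hM0 : 0 ≤ M := by
    obtain ⟨b, hb, -⟩ := hS 0
    exact nonempty_closedBall.1 ⟨b, hM hb⟩
  refine ⟨2 * M + 2 * l₁, by positivity, fun t => ?_⟩
  obtain ⟨b, hbS, hab⟩ := hS (t + M + l₁)
  set a := t + M + l₁
  have hb : |b| ≤ M := by simpa using hM hbS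
  have hfa : τ₁ a - τ₁ b ∈ almostPeriods f ε :=
    almostPeriods_mono (by linarith) (sub_mem_almostPeriods (hτ₁ a) (hτ₁ b))
  have hga : τ₂ a - τ₂ b ∈ almostPeriods g (ε / 2) :=
    almostPeriods_mono (by linarith) (sub_mem_almostPeriods (hτ₂ a) (hτ₂ b))
  refine ⟨τ₁ a - τ₁ b, ⟨hfa, fun s => ?_⟩, ?_, ?_⟩
  · have hclose : dist (g (s + (τ₂ a - τ₂ b))) (g (s + (τ₁ a - τ₁ b))) < ε / 2 := by
      refine hgδ ?_
      rw [Real.dist_eq] at hab ⊢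
      rw [abs_sub_comm]
      convert hab using 2
      ring
    linarith [dist_triangle (g s) (g (s + (τ₂ a - τ₂ b))) (g (s + (τ₁ a - τ₁ b))), hga s]
  · linarith [(hτ₁I a).1, (hτ₁I b).2, abs_le.1 hb]
  · linarith [(hτ₁I a).2, (hτ₁I b).1, abs_le.1 hb]

theorem isBohrAlmostPeriodic_prodMk_iff {E F : Type*} [MetricSpace E] [MetricSpace F]
    {f : ℝ → E} {g : ℝ → F} :
    IsBohrAlmostPeriodic (fun t => (f t, g t)) ↔
      IsBohrAlmostPeriodic f ∧ IsBohrAlmostPeriodic g := by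
  simp only [isBohrAlmostPeriodic_iff, continuous_prodMk, almostPeriods_prodMk]
  constructor
  · rintro ⟨⟨hfc, hgc⟩, h⟩
    exact ⟨⟨hfc, fun ε hε => (h ε hε).mono inter_subset_left⟩,
      ⟨hgc, fun ε hε => (h ε hε).mono inter_subset_right⟩⟩
  · rintro ⟨hf, hg⟩
    exact ⟨⟨hf.1, hg.1⟩, fun ε hε => relativelyDense_almostPeriods_inter hf hg hε⟩

theorem isBohrAlmostPeriodic_prod_iff_general {E F G : Type*}
    [MetricSpace E] [MetricSpace F] [MetricSpace G]
    (x : ℝ → E) (y : ℝ → F) (z : ℝ → G) :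
    (IsBohrAlmostPeriodic x ∧ IsBohrAlmostPeriodic y ∧ IsBohrAlmostPeriodic z) ↔
      IsBohrAlmostPeriodic (fun t => (x t, y t, z t)) := by
  rw [isBohrAlmostPeriodic_prodMk_iff, isBohrAlmostPeriodic_prodMk_iff]

/-- Almost periodicity in product spaces: `x`, `y`, `z` are each Bohr almost
periodic iff `t ↦ (x t, y t, z t)` is Bohr almost periodic for the product
(sup) metric. -/
theorem isBohrAlmostPeriodic_prod_iff {E F G : Type*}
    [MetricSpace E] [MetricSpace F] [MetricSpace G]
    (x : ℝ → E) (y : ℝ → F) (z : ℝ → G)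
    (hx : Continuous x) (hy : Continuous y) (hz : Continuous z) :
    (IsBohrAlmostPeriodic x ∧ IsBohrAlmostPeriodic y ∧ IsBohrAlmostPeriodic z) ↔
      IsBohrAlmostPeriodic (fun t => (x t, y t, z t)) :=
  isBohrAlmostPeriodic_prod_iff_general x y z
end

section
/- Let E be a metric space. A continuous function x : ℝ → E is Bohr almost periodic if and only if the family of translates {x(t + ·) : t ∈ ℝ} is totally bounded in the space of continuous functions ℝ → E with the uniform (sup) metric. -/
open UniformConvergence

/-!
An almost periodic `x` is uniformly continuous: an almost period moves two nearby points into a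
fixed compact window. Given `ε`, every `t` is moved by an `ε/2`-almost period
into a window `[0, l]`, and a finite `δ`-net of `[0, l]` then gives finitely many translates
approximating all of them. Conversely, if the translates by a finite `T ⊆ [-r, r]` are `ε`-dense
and `x (a + r + ·)` is `ε`-close to `x (τ + ·)`, then `a + r - τ ∈ [a, a + 2r]` is an
`ε`-almost period.
-/

open Metric

section

variable {E : Type*}

lemma IsBohrAlmostPeriodic.uniformContinuous_s5 [MetricSpace E] {x : ℝ → E}
    (h : IsBohrAlmostPeriodic x) : UniformContinuous x := by
  rw [Metric.uniformContinuous_iff]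
  intro ε hε
  obtain ⟨l, -, hdense⟩ := h.2 (ε / 4) (by positivity)
  obtain ⟨δ, hδ, hδx⟩ := Metric.uniformContinuousOn_iff.1
    ((isCompact_Icc (a := -1) (b := l + 1)).uniformContinuousOn_of_continuous h.1.continuousOn)
    (ε / 2) (by positivity)
  refine ⟨min δ 1, by positivity, fun {a b} hab => ?_⟩
  obtain ⟨hab_δ, hab_1⟩ := lt_min_iff.1 hab
  rw [Real.dist_eq, abs_lt] at hab_1
  obtain ⟨τ, hτ, hτa, hτl⟩ := hdense (-a)
  have hshift : dist (x (a + τ)) (x (b + τ)) < ε / 2 :=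
    hδx _ ⟨by linarith, by linarith⟩ _ ⟨by linarith, by linarith⟩
      (by rwa [dist_add_right])
  calc dist (x a) (x b)
      ≤ dist (x a) (x (a + τ)) + dist (x (a + τ)) (x (b + τ)) + dist (x (b + τ)) (x b) :=
        dist_triangle4 _ _ _ _
    _ < ε / 4 + ε / 2 + ε / 4 := by
        linarith [hτ a, hτ b, dist_comm (x b) (x (b + τ))]
    _ = ε := by ring

def HasFiniteTranslateNets [PseudoMetricSpace E] (x : ℝ → E) : Prop :=
  ∀ ε > 0, ∃ T : Set ℝ, T.Finite ∧ ∀ t, ∃ τ ∈ T, ∀ s, dist (x (t + s)) (x (τ + s)) ≤ ε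

lemma totallyBounded_translates_iff [PseudoMetricSpace E] (x : ℝ → E) :
    TotallyBounded {f : ℝ →ᵤ E | ∃ t : ℝ, f = UniformFun.ofFun fun s => x (t + s)} ↔
      HasFiniteTranslateNets x := by
  have hbasis := UniformFun.hasBasis_uniformity_of_basis ℝ E uniformity_basis_dist_le
  constructor
  · intro htb ε hε
    obtain ⟨c, hc, hc_fin, hcover⟩ :=
      totallyBounded_iff_subset.1 htb _ (hbasis.mem_of_mem hε)
    choose! shift hshift using fun f (hf : f ∈ c) => hc hf
    refine ⟨shift '' c, hc_fin.image _, fun t => ?_⟩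
    obtain ⟨f, hf, hclose⟩ := Set.mem_iUnion₂.1 (hcover ⟨t, rfl⟩)
    refine ⟨shift f, Set.mem_image_of_mem _ hf, fun s => ?_⟩
    rw [hshift f hf] at hclose
    exact hclose s
  · intro hnet
    rw [hbasis.totallyBounded_iff]
    intro ε hε
    obtain ⟨T, hT, hclose⟩ := hnet ε hε
    refine ⟨(fun τ => UniformFun.ofFun fun s => x (τ + s)) '' T, hT.image _, ?_⟩
    rintro _ ⟨t, rfl⟩
    obtain ⟨τ, hτ, hτt⟩ := hclose t
    exact Set.mem_biUnion (Set.mem_image_of_mem _ hτ) (hτt ·)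

lemma IsBohrAlmostPeriodic.hasFiniteTranslateNets [MetricSpace E] {x : ℝ → E}
    (h : IsBohrAlmostPeriodic x) : HasFiniteTranslateNets x := by
  intro ε hε
  obtain ⟨l, -, hdense⟩ := h.2 (ε / 2) (by positivity)
  obtain ⟨δ, hδ, hδx⟩ := Metric.uniformContinuous_iff_le.1 h.uniformContinuous_s5 (ε / 2)
    (by positivity)
  obtain ⟨T, -, hT, hcover⟩ := (isCompact_Icc (a := 0) (b := l)).finite_cover_balls hδ
  refine ⟨T, hT, fun t => ?_⟩
  obtain ⟨p, hp, hpt, hpl⟩ := hdense (-t)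
  obtain ⟨τ, hτ, hτu⟩ := Set.mem_iUnion₂.1
    (hcover (show t + p ∈ Set.Icc 0 l from ⟨by linarith, by linarith⟩))
  refine ⟨τ, hτ, fun s => ?_⟩
  calc dist (x (t + s)) (x (τ + s))
      ≤ dist (x (t + s)) (x (t + s + p)) + dist (x (t + p + s)) (x (τ + s)) := by
        rw [add_right_comm t s p]; exact dist_triangle _ _ _
    _ ≤ ε / 2 + ε / 2 := by
        gcongr
        · exact hp _
        · exact hδx (by rw [dist_add_right]; exact (mem_ball.1 hτu).le)
    _ = ε := add_halves ε

lemma HasFiniteTranslateNets.relativelyDense [PseudoMetricSpace E] {x : ℝ → E}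
    (h : HasFiniteTranslateNets x) {ε : ℝ} (hε : 0 < ε) :
    RelativelyDense {τ : ℝ | ∀ t : ℝ, dist (x t) (x (t + τ)) ≤ ε} := by
  obtain ⟨T, hT, hclose⟩ := h ε hε
  obtain ⟨r, hr, hTr⟩ := hT.isBounded.subset_closedBall_lt 0 0
  refine ⟨2 * r, by positivity, fun a => ?_⟩
  obtain ⟨τ, hτ, hτclose⟩ := hclose (a + r)
  have hτr : |τ| ≤ r := by simpa [Real.dist_eq] using hTr hτ
  obtain ⟨hτr₁, hτr₂⟩ := abs_le.1 hτr
  refine ⟨a + r - τ, fun t => ?_, by linarith, by linarith⟩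
  have hclose_t := hτclose (t - τ)
  rw [dist_comm] at hclose_t
  convert hclose_t using 3 <;> ring

end

/-- Bochner's criterion: a continuous `x : ℝ → E` is Bohr almost periodic iff
the family of its translates is totally bounded for the uniformity of uniform
convergence (equivalently, for the truncated sup metric). -/
theorem isBohrAlmostPeriodic_iff_totallyBounded_translates
    {E : Type*} [MetricSpace E] (x : ℝ → E) (hx : Continuous x) :
    IsBohrAlmostPeriodic x ↔
      TotallyBounded {f : ℝ →ᵤ E | ∃ t : ℝ, f = UniformFun.ofFun fun s => x (t + s)} := by
  rw [totallyBounded_translates_iff]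
  exact ⟨IsBohrAlmostPeriodic.hasFiniteTranslateNets,
    fun h => ⟨hx, fun _ hε => h.relativelyDense hε⟩⟩
end

section
/- Let E be a complete metric space and x : ℝ → E continuous. Then x is Bohr almost periodic if and only if for every pair of real sequences (α'_n), (β'_n) there exist subsequences (α_n), (β_n) with common indices such that for every t ∈ ℝ the iterated limit lim_m lim_n x(t + α_n + β_m) and the diagonal limit lim_n x(t + α_n + β_n) both exist and are equal. -/
open Filter Topology

/-!
Both conditions are equivalent to Bochner's normality: every sequence of translates
`x (· + c n)` has a uniformly convergent subsequence.

A Bohr almost periodic `x` is uniformly continuous and bounded, and each of its translates is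
uniformly `ε`-close to a translate by some `r ∈ [0, l]`; so its translates form a totally bounded
set of bounded continuous functions, and completeness gives the convergent subsequence. If
`x (· + α n) → g` and `x (· + β m)` converge uniformly, the Cauchy bounds of the latter pass to
`g (t + β m)`, whose limit is then the iterated limit, and uniformity makes the diagonal follow.

Conversely, with `β = 0` the double sequence condition gives pointwise limits, and applied with
`β` a sequence of points witnessing non-uniformity it forces the convergence to be uniform. If
some set of `ε`-almost periods were not relatively dense, its arbitrarily large holes would give
translates that are pairwise `ε`-apart, which a normal function cannot have.
-/

section

open Set Metric BoundedContinuousFunction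

theorem Metric.totallyBounded_of_forall_subset_thickening {α : Type*} [PseudoMetricSpace α]
    {s : Set α} (h : ∀ ε > 0, ∃ K, TotallyBounded K ∧ s ⊆ thickening ε K) :
    TotallyBounded s := by
  refine totallyBounded_iff.2 fun ε hε => ?_
  obtain ⟨K, hK, hsK⟩ := h (ε / 2) (half_pos hε)
  obtain ⟨t, ht, hKt⟩ := totallyBounded_iff.1 hK (ε / 2) (half_pos hε)
  refine ⟨t, ht, fun a ha => ?_⟩
  obtain ⟨b, hb, hab⟩ := mem_thickening_iff.1 (hsK ha)
  obtain ⟨y, hy, hby⟩ := mem_iUnion₂.1 (hKt hb)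
  refine mem_iUnion₂.2 ⟨y, hy, ?_⟩
  rw [mem_ball] at hby ⊢
  linarith [dist_triangle a b y]

theorem TendstoUniformly.tendsto_comp_of_tendsto {ι α β : Type*} [UniformSpace β]
    {F : ι → α → β} {f : α → β} {p : Filter ι} (h : TendstoUniformly F f p) {u : ι → α} {b : β}
    (hu : Tendsto (fun n => f (u n)) p (𝓝 b)) : Tendsto (fun n => F n (u n)) p (𝓝 b) :=
  hu.congr_uniformity <|
    (tendstoUniformly_iff_tendsto.1 h).comp (tendsto_id.prodMk tendsto_top)

theorem exists_lt_abs_sub_of_not_relativelyDense {A : Set ℝ} (h : ¬ RelativelyDense A) (R : ℝ) :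
    ∃ c, ∀ a ∈ A, R < |a - c| := by
  simp only [RelativelyDense, not_exists, not_forall, not_and] at h
  obtain ⟨t, ht⟩ := h (2 * |R| + 2) (by positivity)
  refine ⟨t + |R| + 1, fun a ha => lt_of_not_ge fun hle => ht a ha ?_⟩
  obtain ⟨h₁, h₂⟩ := abs_le.1 (hle.trans (le_abs_self R))
  constructor <;> linarith

theorem exists_seq_sub_notMem_of_not_relativelyDense {A : Set ℝ} (h : ¬ RelativelyDense A) :
    ∃ d : ℕ → ℝ, ∀ ⦃m n⦄, n < m → d m - d n ∉ A := by
  choose c hc using exists_lt_abs_sub_of_not_relativelyDense h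
  -- `d n` is the centre of a hole of radius `M n`, and `M n` bounds `|d k|` for all `k < n`.
  let M : ℕ → ℝ := fun n => Nat.rec (motive := fun _ => ℝ) 0 (fun _ R => max R |c R|) n
  have hM : Monotone M := monotone_nat_of_le_succ fun n => le_max_left _ _
  refine ⟨fun n => c (M n), fun m n hnm hA => ?_⟩
  have hn : |c (M n)| ≤ M m := (le_max_right (M n) _).trans (hM hnm)
  have hm := hc (M m) _ hA
  rw [sub_sub_cancel_left, abs_neg] at hm
  linarith

variable {E : Type*} [MetricSpace E] {x : ℝ → E}

namespace IsBohrAlmostPeriodic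

theorem exists_dist_translate_le (hx : IsBohrAlmostPeriodic x) {ε : ℝ} (hε : 0 < ε) :
    ∃ l, ∀ c, ∃ r ∈ Icc 0 l, ∀ t, dist (x (t + c)) (x (t + r)) ≤ ε := by
  obtain ⟨l, -, hl⟩ := hx.2 ε hε
  refine ⟨l, fun c => ?_⟩
  obtain ⟨τ, hτ, hτc⟩ := hl (c - l)
  refine ⟨c - τ, ⟨by linarith [hτc.2], by linarith [hτc.1]⟩, fun t => ?_⟩
  have := hτ (t + (c - τ))
  rwa [add_assoc, sub_add_cancel, dist_comm] at this

theorem uniformContinuous_s6 (hx : IsBohrAlmostPeriodic x) : UniformContinuous x := by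
  rw [Metric.uniformContinuous_iff]
  intro ε hε
  obtain ⟨l, hl⟩ := hx.exists_dist_translate_le (ε := ε / 3) (by positivity)
  obtain ⟨δ, hδ, hδl⟩ := Metric.uniformContinuousOn_iff.1
    ((isCompact_Icc (a := -1) (b := l + 1)).uniformContinuousOn_of_continuous hx.1.continuousOn)
    (ε / 3) (by positivity)
  refine ⟨min δ 1, by positivity, fun {s t} hst => ?_⟩
  obtain ⟨r, ⟨hr₀, hrl⟩, hr⟩ := hl t
  have hs := hr (s - t)
  have ht := hr 0
  rw [sub_add_cancel] at hs
  rw [zero_add, zero_add] at ht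
  rw [Real.dist_eq, lt_min_iff, abs_lt, abs_lt] at hst
  have hmid : dist (x (s - t + r)) (x r) < ε / 3 :=
    hδl _ ⟨by linarith, by linarith⟩ _ ⟨by linarith, by linarith⟩
      (by rw [Real.dist_eq, add_sub_cancel_right, abs_lt]; constructor <;> linarith)
  calc dist (x s) (x t) ≤ dist (x s) (x (s - t + r)) + dist (x (s - t + r)) (x r)
        + dist (x r) (x t) := dist_triangle4 _ _ _ _
    _ < ε := by rw [dist_comm (x r)]; linarith

theorem isBounded_range (hx : IsBohrAlmostPeriodic x) : Bornology.IsBounded (range x) := by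
  obtain ⟨l, hl⟩ := hx.exists_dist_translate_le one_pos
  refine (((isCompact_Icc (a := 0) (b := l)).image hx.1).isBounded.cthickening (δ := 1)).subset ?_
  rintro _ ⟨c, rfl⟩
  obtain ⟨r, hr, hrc⟩ := hl c
  exact mem_cthickening_of_dist_le _ (x r) 1 _ (mem_image_of_mem x hr) (by simpa using hrc 0)

noncomputable def translate (hx : IsBohrAlmostPeriodic x) (c : ℝ) : ℝ →ᵇ E :=
  .mkOfBound ⟨fun t => x (t + c), hx.1.comp (continuous_add_const c)⟩ (diam (range x))
    fun _ _ => dist_le_diam_of_mem hx.isBounded_range (mem_range_self _) (mem_range_self _)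

theorem dist_translate_le (hx : IsBohrAlmostPeriodic x) {c c' ε : ℝ} (hε : 0 ≤ ε)
    (h : ∀ t, dist (x (t + c)) (x (t + c')) ≤ ε) : dist (hx.translate c) (hx.translate c') ≤ ε :=
  (BoundedContinuousFunction.dist_le hε).2 h

theorem continuous_translate (hx : IsBohrAlmostPeriodic x) : Continuous hx.translate := by
  refine Metric.continuous_iff.2 fun c ε hε => ?_
  obtain ⟨δ, hδ, hxδ⟩ := Metric.uniformContinuous_iff.1 hx.uniformContinuous_s6 (ε / 2) (half_pos hε)
  refine ⟨δ, hδ, fun c' hc' => (hx.dist_translate_le (half_pos hε).le fun t => (hxδ ?_).le).trans_lt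
    (half_lt_self hε)⟩
  rwa [Real.dist_eq, add_sub_add_left_eq_sub, ← Real.dist_eq]

theorem totallyBounded_range_translate (hx : IsBohrAlmostPeriodic x) :
    TotallyBounded (range hx.translate) := by
  refine totallyBounded_of_forall_subset_thickening fun ε hε => ?_
  obtain ⟨l, hl⟩ := hx.exists_dist_translate_le (half_pos hε)
  refine ⟨hx.translate '' Icc 0 l, (isCompact_Icc.image hx.continuous_translate).totallyBounded,
    ?_⟩
  rintro _ ⟨c, rfl⟩
  obtain ⟨r, hr, hrc⟩ := hl c
  exact mem_thickening_iff.2 ⟨_, mem_image_of_mem _ hr,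
    (hx.dist_translate_le (half_pos hε).le hrc).trans_lt (half_lt_self hε)⟩

end IsBohrAlmostPeriodic

def IsBochnerNormal (x : ℝ → E) : Prop :=
  ∀ c : ℕ → ℝ, ∃ φ : ℕ → ℕ, StrictMono φ ∧ ∃ g : ℝ → E,
    TendstoUniformly (fun n t => x (t + c (φ n))) g atTop

theorem IsBohrAlmostPeriodic.isBochnerNormal [CompleteSpace E] (hx : IsBohrAlmostPeriodic x) :
    IsBochnerNormal x := by
  intro c
  have hK : IsCompact (closure (range hx.translate)) :=
    hx.totallyBounded_range_translate.closure.isCompact_of_isClosed isClosed_closure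
  obtain ⟨g, -, φ, hφ, hg⟩ := hK.tendsto_subseq fun n => subset_closure (mem_range_self (c n))
  exact ⟨φ, hφ, g, BoundedContinuousFunction.tendsto_iff_tendstoUniformly.1 hg⟩

theorem IsBochnerNormal.isBohrAlmostPeriodic (hx : IsBochnerNormal x) (hc : Continuous x) :
    IsBohrAlmostPeriodic x := by
  refine ⟨hc, fun ε hε => ?_⟩
  by_contra hA
  obtain ⟨d, hd⟩ := exists_seq_sub_notMem_of_not_relativelyDense hA
  obtain ⟨φ, hφ, g, hg⟩ := hx d
  obtain ⟨N, hN⟩ :=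
    Metric.uniformCauchySeqOn_iff.1 (hg.tendstoUniformlyOn (s := univ)).uniformCauchySeqOn ε hε
  obtain ⟨s, hs⟩ : ∃ s, ε < dist (x s) (x (s + (d (φ (N + 1)) - d (φ N)))) := by
    simpa using hd (hφ N.lt_succ_self)
  have hN' := hN N le_rfl (N + 1) N.le_succ (s - d (φ N)) (mem_univ _)
  rw [sub_add_cancel, sub_add_eq_add_sub, add_sub_assoc] at hN'
  linarith

def HasDoubleSequenceLimits (x : ℝ → E) : Prop :=
  ∀ α' β' : ℕ → ℝ, ∃ φ : ℕ → ℕ, StrictMono φ ∧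
    ∀ t : ℝ, ∃ L : E,
      (∃ z : ℕ → E,
        (∀ m : ℕ, Tendsto (fun n => x (t + α' (φ n) + β' (φ m))) atTop (𝓝 (z m))) ∧
        Tendsto z atTop (𝓝 L)) ∧
      Tendsto (fun n => x (t + α' (φ n) + β' (φ n))) atTop (𝓝 L)

theorem dist_le_of_tendsto_translate {g : ℝ → E} {α : ℕ → ℝ}
    (hg : ∀ u, Tendsto (fun n => x (u + α n)) atTop (𝓝 (g u))) {a b C : ℝ}
    (h : ∀ v, dist (x (v + a)) (x (v + b)) ≤ C) (u : ℝ) : dist (g (u + a)) (g (u + b)) ≤ C :=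
  le_of_tendsto ((hg _).dist (hg _)) <| Eventually.of_forall fun n => by
    rw [add_right_comm u a, add_right_comm u b]
    exact h _

theorem IsBochnerNormal.hasDoubleSequenceLimits [CompleteSpace E] (hx : IsBochnerNormal x) :
    HasDoubleSequenceLimits x := by
  intro α' β'
  obtain ⟨φ₁, hφ₁, g, hg⟩ := hx α'
  obtain ⟨φ₂, hφ₂, _, hβ⟩ := hx (β' ∘ φ₁)
  refine ⟨φ₁ ∘ φ₂, hφ₁.comp hφ₂, fun t => ?_⟩
  set α := α' ∘ φ₁ ∘ φ₂
  set β := β' ∘ φ₁ ∘ φ₂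
  have hα : TendstoUniformly (fun n u => x (u + α n)) g atTop :=
    fun U hU => hφ₂.tendsto_atTop.eventually (hg U hU)
  have hz : ∀ m, Tendsto (fun n => x (t + α n + β m)) atTop (𝓝 (g (t + β m))) := fun m => by
    simpa only [add_right_comm t] using hα.tendsto_at (t + β m)
  have hcauchy : CauchySeq fun m => g (t + β m) := by
    refine Metric.cauchySeq_iff.2 fun ε hε => ?_
    obtain ⟨N, hN⟩ := Metric.uniformCauchySeqOn_iff.1
      (hβ.tendstoUniformlyOn (s := univ)).uniformCauchySeqOn (ε / 2) (half_pos hε)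
    exact ⟨N, fun m hm n hn => (dist_le_of_tendsto_translate hα.tendsto_at
      (fun v => (hN m hm n hn v (mem_univ v)).le) t).trans_lt (half_lt_self hε)⟩
  obtain ⟨L, hL⟩ := cauchySeq_tendsto_of_complete hcauchy
  have hdiag : Tendsto (fun n => x (t + α n + β n)) atTop (𝓝 L) := by
    simpa only [add_right_comm t] using hα.tendsto_comp_of_tendsto hL
  exact ⟨L, ⟨_, hz, hL⟩, hdiag⟩

theorem HasDoubleSequenceLimits.tendstoUniformly_of_tendsto (hx : HasDoubleSequenceLimits x)
    {c : ℕ → ℝ} {g : ℝ → E} (hg : ∀ t, Tendsto (fun n => x (t + c n)) atTop (𝓝 (g t))) :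
    TendstoUniformly (fun n t => x (t + c n)) g atTop := by
  rw [Metric.tendstoUniformly_iff]
  by_contra! hfar
  obtain ⟨ε, hε, hfar⟩ := hfar
  obtain ⟨ψ, hψ, hs⟩ := extraction_of_frequently_atTop hfar
  choose s hs using hs
  obtain ⟨θ, hθ, hlim⟩ := hx (c ∘ ψ) s
  obtain ⟨L, ⟨z, hz, hzL⟩, hdiag⟩ := hlim 0
  have hz_eq : z = fun m => g (s (θ m)) := funext fun m => tendsto_nhds_unique (hz m) <| by
    simpa [add_comm, Function.comp_def] using (hg (s (θ m))).comp (hψ.comp hθ).tendsto_atTop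
  rw [hz_eq] at hzL
  have h0 : Tendsto (fun n => dist (g (s (θ n))) (x (s (θ n) + c (ψ (θ n))))) atTop (𝓝 0) := by
    simpa [add_comm] using hzL.dist hdiag
  exact hε.not_ge (ge_of_tendsto' h0 fun n => hs (θ n))

theorem HasDoubleSequenceLimits.isBochnerNormal (hx : HasDoubleSequenceLimits x) :
    IsBochnerNormal x := by
  intro c
  obtain ⟨φ, hφ, hlim⟩ := hx c 0
  choose g hg using hlim
  exact ⟨φ, hφ, g, hx.tendstoUniformly_of_tendsto fun t => by simpa using (hg t).2⟩

end

/-- Bochner's double sequence criterion: for complete `E`, a continuous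
`x : ℝ → E` is Bohr almost periodic iff for every pair of real sequences
there are subsequences (with common indices) along which the iterated limit
and the diagonal limit exist and agree, for every `t`. -/
theorem isBohrAlmostPeriodic_iff_double_sequence
    {E : Type*} [MetricSpace E] [CompleteSpace E] (x : ℝ → E) (hx : Continuous x) :
    IsBohrAlmostPeriodic x ↔
      ∀ α' β' : ℕ → ℝ, ∃ φ : ℕ → ℕ, StrictMono φ ∧
        ∀ t : ℝ, ∃ L : E,
          (∃ z : ℕ → E,
            (∀ m : ℕ, Tendsto (fun n => x (t + α' (φ n) + β' (φ m))) atTop (𝓝 (z m))) ∧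
            Tendsto z atTop (𝓝 L)) ∧
          Tendsto (fun n => x (t + α' (φ n) + β' (φ n))) atTop (𝓝 L) :=
  ⟨fun h => h.isBochnerNormal.hasDoubleSequenceLimits,
    fun h => HasDoubleSequenceLimits.isBochnerNormal h |>.isBohrAlmostPeriodic hx⟩
end
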